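/- Let v₀, v₁, …, v_L be vectors in a real inner product space and let v̄ = (1/(L+1)) ∑_{l=0}^{L} v_l be their mean. Then ∑_{l=0}^{L} ‖v_l − v̄‖² ≤ (1 / (4 sin²(π / (2(L+1))))) · ∑_{l=0}^{L−1} ‖v_{l+1} − v_l‖². -/

import Mathlib

/-!
Write the centred sequence `x` as the increments `x j = y (j + 1) - y j` of its partial sums
`y`, which vanish at both ends `0` and `L + 1`. Summation by parts turns `∑ ‖x j‖²` into
`-∑ ⟪x (j + 1) - x j, y (j + 1)⟫`, and AM-GM bounds this by
`(λ ∑ ‖y j‖² + λ⁻¹ ∑ ‖x (j + 1) - x j‖²) / 2` with `λ = 4 sin² (π / (2 (L + 1)))`.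
The Dirichlet Poincaré inequality `λ ∑ ‖y j‖² ≤ ∑ ‖x j‖²` closes the argument. It follows from
the positive Dirichlet ground state `j ↦ sin (j π / (L + 1))`: weighting
`2 ⟪a, b⟫ ≤ (q / p) ‖a‖² + (p / q) ‖b‖²` on each edge by the ground state at its two ends makes
the total coefficient of every `‖y j‖²` equal to `2 - 2 cos (π / (L + 1)) = λ`.
-/

open Finset Real

lemma four_mul_sin_sq_pi_div_two_mul_succ_pos (L : ℕ) : 0 < 4 * sin (π / (2 * (L + 1))) ^ 2 := by
  have hsin : 0 < sin (π / (2 * (L + 1))) := by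
    apply sin_pos_of_pos_of_lt_pi (by positivity)
    rw [div_lt_iff₀ (by positivity)]
    nlinarith [pi_pos, (Nat.cast_nonneg L : (0 : ℝ) ≤ L)]
  positivity

section InnerProductSpace

variable {E : Type*} [NormedAddCommGroup E] [InnerProductSpace ℝ E]

lemma one_sub_div_mul_sq_add_le_norm_sub_sq {p q : ℝ} {a b : E} (hp : 0 ≤ p) (hq : 0 ≤ q)
    (ha : p = 0 → a = 0) (hb : q = 0 → b = 0) :
    (1 - q / p) * ‖a‖ ^ 2 + (1 - p / q) * ‖b‖ ^ 2 ≤ ‖b - a‖ ^ 2 := by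
  rcases hp.eq_or_lt with rfl | hp
  · simp [ha rfl]
  rcases hq.eq_or_lt with rfl | hq
  · simp [hb rfl]
  have hsq := sq_nonneg ‖q • a - p • b‖
  rw [norm_sub_sq_real, norm_smul, norm_smul, real_inner_smul_left, real_inner_smul_right,
    Real.norm_of_nonneg hp.le, Real.norm_of_nonneg hq.le] at hsq
  have hinner : 2 * inner ℝ a b ≤ q / p * ‖a‖ ^ 2 + p / q * ‖b‖ ^ 2 := by
    rw [div_mul_eq_mul_div, div_mul_eq_mul_div, div_add_div _ _ hp.ne' hq.ne',
      le_div_iff₀ (by positivity)]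
    nlinarith
  rw [norm_sub_sq_real, real_inner_comm]
  linarith

lemma dirichlet_poincare_of_supersolution {n : ℕ} {φ : ℕ → ℝ} {c : ℝ} {y : ℕ → E}
    (hφ0 : 0 ≤ φ 0) (hφn : 0 ≤ φ n) (hφpos : ∀ j, 0 < j → j < n → 0 < φ j)
    (hφsuper : ∀ j, 0 < j → j < n → φ (j - 1) + φ (j + 1) ≤ 2 * c * φ j)
    (hy0 : y 0 = 0) (hyn : y n = 0) :
    (2 - 2 * c) * ∑ j ∈ range n, ‖y j‖ ^ 2 ≤ ∑ j ∈ range n, ‖y (j + 1) - y j‖ ^ 2 := by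
  have hweight : ∀ j ≤ n, 0 ≤ φ j ∧ (φ j = 0 → y j = 0) := by
    intro j hj
    rcases Nat.eq_zero_or_pos j with rfl | hj0
    · exact ⟨hφ0, fun _ => hy0⟩
    rcases hj.eq_or_lt with rfl | hjn
    · exact ⟨hφn, fun _ => hyn⟩
    exact ⟨(hφpos j hj0 hjn).le, fun h => absurd h (hφpos j hj0 hjn).ne'⟩
  set f : ℕ → ℝ := fun j => (1 - φ (j + 1) / φ j) * ‖y j‖ ^ 2
  set g : ℕ → ℝ := fun j => (1 - φ (j - 1) / φ j) * ‖y j‖ ^ 2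
  have hedge : ∀ j ∈ range n, f j + g (j + 1) ≤ ‖y (j + 1) - y j‖ ^ 2 := by
    intro j hj
    obtain ⟨hp, ha⟩ := hweight j (mem_range.mp hj).le
    obtain ⟨hq, hb⟩ := hweight (j + 1) (mem_range.mp hj)
    simpa [f, g] using one_sub_div_mul_sq_add_le_norm_sub_sq hp hq ha hb
  have hshift : ∑ j ∈ range n, g (j + 1) = ∑ j ∈ range n, g j := by
    have := sum_range_succ' g n
    rw [sum_range_succ] at this
    simp only [g, hy0, hyn, norm_zero] at this ⊢
    linarith
  have hvertex : ∀ j ∈ range n, (2 - 2 * c) * ‖y j‖ ^ 2 ≤ f j + g j := by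
    intro j hj
    rcases Nat.eq_zero_or_pos j with rfl | hj0
    · simp [f, g, hy0]
    have hφj := hφpos j hj0 (mem_range.mp hj)
    have hratio : (φ (j - 1) + φ (j + 1)) / φ j ≤ 2 * c :=
      (div_le_iff₀ hφj).mpr (hφsuper j hj0 (mem_range.mp hj))
    have hfg : f j + g j = (2 - (φ (j - 1) + φ (j + 1)) / φ j) * ‖y j‖ ^ 2 := by
      simp only [f, g]; ring
    rw [hfg]
    gcongr
  calc (2 - 2 * c) * ∑ j ∈ range n, ‖y j‖ ^ 2 ≤ ∑ j ∈ range n, (f j + g j) := by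
        rw [mul_sum]; exact sum_le_sum hvertex
    _ = ∑ j ∈ range n, (f j + g (j + 1)) := by rw [sum_add_distrib, sum_add_distrib, hshift]
    _ ≤ ∑ j ∈ range n, ‖y (j + 1) - y j‖ ^ 2 := sum_le_sum hedge

theorem dirichlet_poincare_path (n : ℕ) {y : ℕ → E} (hy0 : y 0 = 0) (hyn : y n = 0) :
    4 * sin (π / (2 * n)) ^ 2 * ∑ j ∈ range n, ‖y j‖ ^ 2
      ≤ ∑ j ∈ range n, ‖y (j + 1) - y j‖ ^ 2 := by
  rcases Nat.eq_zero_or_pos n with rfl | hn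
  · simp
  have hn' : (0 : ℝ) < n := Nat.cast_pos.mpr hn
  have hhalf : π / n = 2 * (π / (2 * n)) := by field_simp
  rw [show 4 * sin (π / (2 * n)) ^ 2 = 2 - 2 * cos (π / n) by
    rw [hhalf, cos_two_mul_eq_one_sub]; ring]
  refine dirichlet_poincare_of_supersolution (φ := fun j => sin (j * (π / n)))
    ?_ ?_ ?_ ?_ hy0 hyn
  · simp
  · simp [mul_div_cancel₀ π hn'.ne']
  · intro j hj0 hjn
    apply sin_pos_of_pos_of_lt_pi (by positivity)
    rw [mul_div_assoc', div_lt_iff₀ hn', mul_comm]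
    exact mul_lt_mul_of_pos_left (Nat.cast_lt.mpr hjn) pi_pos
  · intro j hj0 _
    rw [Nat.cast_sub hj0, Nat.cast_add, Nat.cast_one, sub_mul, add_mul, one_mul,
      ← two_mul_sin_mul_cos, mul_right_comm]

lemma sum_inner_sub_eq_neg_sum_sub_inner (n : ℕ) (x y : ℕ → E) (hy0 : y 0 = 0)
    (hyn : y (n + 1) = 0) :
    ∑ j ∈ range (n + 1), inner ℝ (x j) (y (j + 1) - y j)
      = -∑ j ∈ range n, inner ℝ (x (j + 1) - x j) (y (j + 1)) := by
  simp only [inner_sub_right, inner_sub_left, sum_sub_distrib]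
  rw [sum_range_succ (fun j => inner ℝ (x j) (y (j + 1))),
    sum_range_succ' (fun j => inner ℝ (x j) (y j)), hy0, hyn]
  simp only [inner_zero_right, add_zero]
  ring

lemma neg_two_mul_inner_le (t : ℝ) (a b : E) :
    -(2 * t * inner ℝ a b) ≤ t ^ 2 * ‖b‖ ^ 2 + ‖a‖ ^ 2 := by
  have h := sq_nonneg ‖a + t • b‖
  rw [norm_add_sq_real, norm_smul, real_inner_smul_right, mul_pow, Real.norm_eq_abs,
    sq_abs] at h
  linarith

theorem neumann_poincare_path (L : ℕ) {x : ℕ → E} (hx : ∑ j ∈ range (L + 1), x j = 0) :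
    4 * sin (π / (2 * (L + 1))) ^ 2 * ∑ j ∈ range (L + 1), ‖x j‖ ^ 2
      ≤ ∑ j ∈ range L, ‖x (j + 1) - x j‖ ^ 2 := by
  set lam := 4 * sin (π / (2 * (L + 1))) ^ 2
  have hlam : 0 < lam := four_mul_sin_sq_pi_div_two_mul_succ_pos L
  set y : ℕ → E := fun j => ∑ i ∈ range j, x i
  have hy0 : y 0 = 0 := sum_range_zero x
  have hxy : ∀ j, y (j + 1) - y j = x j := fun j => by simp [y, sum_range_succ]
  set S := ∑ j ∈ range (L + 1), ‖x j‖ ^ 2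
  have hdirichlet : lam * ∑ j ∈ range L, ‖y (j + 1)‖ ^ 2 ≤ S := by
    have h := dirichlet_poincare_path (L + 1) hy0 hx
    rw [sum_range_succ' (fun j => ‖y j‖ ^ 2), hy0] at h
    simpa [hxy] using h
  have hparts : S = -∑ j ∈ range L, inner ℝ (x (j + 1) - x j) (y (j + 1)) := by
    rw [← sum_inner_sub_eq_neg_sum_sub_inner L x y hy0 hx]
    simp [S, hxy]
  have hamgm := sum_le_sum fun j (_ : j ∈ range L) =>
    neg_two_mul_inner_le lam (x (j + 1) - x j) (y (j + 1))
  rw [sum_add_distrib, ← mul_sum, sum_neg_distrib, ← mul_sum] at hamgm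
  have hlamY := mul_le_mul_of_nonneg_left hdirichlet hlam.le
  rw [hparts] at hlamY ⊢
  nlinarith

end InnerProductSpace

/-- **discrete Poincaré/Wirtinger inequality on a chain.**
Let `v₀, …, v_L` be vectors in a real inner product space and
`v̄ = (1/(L+1)) ∑_{l=0}^L v_l` their mean. Then
`∑_{l=0}^L ‖v_l − v̄‖² ≤ (1 / (4 sin²(π / (2(L+1))))) ∑_{l=0}^{L−1} ‖v_{l+1} − v_l‖²`. -/
theorem discrete_poincare_chain {E : Type*} [NormedAddCommGroup E] [InnerProductSpace ℝ E]
    (L : ℕ) (v : ℕ → E) :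
    ∑ l ∈ Finset.range (L + 1),
        ‖v l - (((L : ℝ) + 1)⁻¹ • ∑ k ∈ Finset.range (L + 1), v k)‖ ^ 2
      ≤ (1 / (4 * Real.sin (Real.pi / (2 * ((L : ℝ) + 1))) ^ 2)) *
          ∑ l ∈ Finset.range L, ‖v (l + 1) - v l‖ ^ 2 := by
  set mean := ((L : ℝ) + 1)⁻¹ • ∑ k ∈ range (L + 1), v k
  have hmean : ∑ l ∈ range (L + 1), (v l - mean) = 0 := by
    rw [sum_sub_distrib, sum_const, card_range, ← Nat.cast_smul_eq_nsmul ℝ, smul_smul,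
      Nat.cast_succ, mul_inv_cancel₀ (by positivity), one_smul, sub_self]
  have h := neumann_poincare_path L hmean
  simp only [sub_sub_sub_cancel_right] at h
  rwa [one_div, inv_mul_eq_div, le_div_iff₀ (four_mul_sin_sq_pi_div_two_mul_succ_pos L),
    mul_comm]
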